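/- arXiv:2111.02355 — 4 statements merged into one kernel-verified Lean document; each statement's English description precedes it below -/
import Mathlib

section
/- Let (X, Y) be jointly distributed random variables with X = (X_1,...,X_d) taking finitely many values, each with strictly positive probability. If S_1 and S_2 are subsets of the coordinates of X such that E[Y | S_1] = E[Y | X] almost surely and E[Y | S_2] = E[Y | X] almost surely, then E[Y | S_1 ∩ S_2] = E[Y | X] almost surely. -/
open MeasureTheory

/-!
Since every atom of `X` has positive mass, an a.e. identity between functions of `X` holds on a
point of every atom, hence everywhere. So `E[Y | X]` is pointwise a function of the
`S₁`-coordinates and also a function of the `S₂`-coordinates. As `X` takes every joint value,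
the `S₁`-coordinates of one outcome can be spliced with the remaining coordinates of another,
which makes `E[Y | X]` a function of the `(S₁ ∩ S₂)`-coordinates. Being measurable for the
coordinates in `S₁ ∩ S₂`, it is its own conditional expectation given them, and by the tower
property that conditional expectation is `E[Y | S₁ ∩ S₂]`.
-/

/-- The sigma-algebra generated by the coordinates of `X` indexed by `S`. -/
def coordSigma {Ω : Type*} {d : ℕ} {α : Fin d → Type*}
    [∀ i, MeasurableSpace (α i)] (X : ∀ i, Ω → α i) (S : Set (Fin d)) :
    MeasurableSpace Ω :=
  MeasurableSpace.comap (fun ω => fun i : S => X i ω) MeasurableSpace.pi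

theorem Function.FactorsThrough.measurable_comap {Ω β γ : Type*} [MeasurableSpace β]
    [mγ : MeasurableSpace γ] [DiscreteMeasurableSpace γ] {f : Ω → γ} {g : Ω → β}
    (hg : g.FactorsThrough f) : Measurable[mγ.comap f] g := by
  intro B _
  refine ⟨f '' (g ⁻¹' B), .of_discrete, Set.ext fun ω => ⟨?_, fun hω => ⟨ω, hω, rfl⟩⟩⟩
  rintro ⟨ω', hω', hf⟩
  rw [Set.mem_preimage, ← hg hf]
  exact hω'

section Coordinates

variable {Ω β : Type*} {d : ℕ} {α : Fin d → Type*}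

def coordMap (X : ∀ i, Ω → α i) (S : Set (Fin d)) (ω : Ω) : ∀ i : S, α i :=
  fun i => X i ω

variable (X : ∀ i, Ω → α i)

theorem coordMap_eq_coordMap_iff {S : Set (Fin d)} {ω ω' : Ω} :
    coordMap X S ω = coordMap X S ω' ↔ ∀ i ∈ S, X i ω = X i ω' := by
  simp [coordMap, funext_iff]

theorem Function.FactorsThrough.coordMap_inter {f : Ω → β} {S₁ S₂ : Set (Fin d)}
    (hX : Function.Surjective fun ω i => X i ω)
    (h₁ : f.FactorsThrough (coordMap X S₁)) (h₂ : f.FactorsThrough (coordMap X S₂)) :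
    f.FactorsThrough (coordMap X (S₁ ∩ S₂)) := by
  classical
  intro ω ω' h
  rw [coordMap_eq_coordMap_iff] at h
  -- a point whose `S₁`-coordinates are those of `ω` and all other coordinates those of `ω'`
  obtain ⟨ω'', hω''⟩ := hX fun i => if i ∈ S₁ then X i ω else X i ω'
  have hcoord (i : Fin d) : X i ω'' = if i ∈ S₁ then X i ω else X i ω' := congrFun hω'' i
  have e₁ : f ω = f ω'' := h₁ <| (coordMap_eq_coordMap_iff X).2 fun i hi => by
    simp [hcoord, hi]
  have e₂ : f ω'' = f ω' := h₂ <| (coordMap_eq_coordMap_iff X).2 fun i hi => by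
    by_cases hi₁ : i ∈ S₁
    · simpa [hcoord, hi₁] using h i ⟨hi₁, hi⟩
    · simp [hcoord, hi₁]
  exact e₁.trans e₂

theorem Function.FactorsThrough.of_ae_eq [MeasurableSpace Ω] {μ : Measure Ω}
    (hpos : ∀ x : ∀ i, α i, μ {ω | ∀ i, X i ω = x i} ≠ 0) {S : Set (Fin d)} {f g : Ω → β}
    (hf : f.FactorsThrough (coordMap X Set.univ)) (hg : g.FactorsThrough (coordMap X S))
    (hfg : g =ᵐ[μ] f) : f.FactorsThrough (coordMap X S) := by
  have hgood (ω : Ω) : ∃ a, (∀ i, X i a = X i ω) ∧ g a = f a := by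
    have hnull : μ {a | g a = f a}ᶜ = 0 := ae_iff.1 hfg
    exact nonempty_of_measure_ne_zero <|
      (measure_inter_conull hnull).symm ▸ hpos fun i => X i ω
  intro ω ω' h
  rw [coordMap_eq_coordMap_iff] at h
  obtain ⟨a, ha, hga⟩ := hgood ω
  obtain ⟨a', ha', hga'⟩ := hgood ω'
  have hgaa' : g a = g a' := hg <| (coordMap_eq_coordMap_iff X).2 fun i hi => by
    rw [ha, ha', h i hi]
  calc f ω = f a := hf <| (coordMap_eq_coordMap_iff X).2 fun i _ => (ha i).symm
    _ = f a' := by rw [← hga, hgaa', hga']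
    _ = f ω' := hf <| (coordMap_eq_coordMap_iff X).2 fun i _ => ha' i

variable [∀ i, MeasurableSpace (α i)]

theorem coordSigma_mono {S T : Set (Fin d)} (hST : S ⊆ T) : coordSigma X S ≤ coordSigma X T := by
  have hres : Measurable fun (y : ∀ i : T, α i) (i : S) => y ⟨i, hST i.2⟩ :=
    measurable_pi_lambda _ fun i => measurable_pi_apply _
  calc coordSigma X S = (MeasurableSpace.pi.comap _).comap (coordMap X T) := by
        rw [MeasurableSpace.comap_comp]; rfl
    _ ≤ coordSigma X T := MeasurableSpace.comap_mono hres.comap_le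

theorem coordSigma_le [MeasurableSpace Ω] (hX : ∀ i, Measurable (X i)) (S : Set (Fin d)) :
    coordSigma X S ≤ ‹MeasurableSpace Ω› :=
  (measurable_pi_lambda (coordMap X S) fun i => hX i).comap_le

theorem measurable_coordSigma_iff [∀ i, Finite (α i)] [∀ i, MeasurableSingletonClass (α i)]
    [MeasurableSpace β] [MeasurableSingletonClass β] {S : Set (Fin d)} {f : Ω → β} :
    Measurable[coordSigma X S] f ↔ f.FactorsThrough (coordMap X S) :=
  ⟨Measurable.factorsThrough, Function.FactorsThrough.measurable_comap⟩

end Coordinates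

theorem stmt0_general {Ω : Type*} [MeasurableSpace Ω] (μ : Measure Ω) [IsProbabilityMeasure μ]
    {d : ℕ} {α : Fin d → Type*} [∀ i, Fintype (α i)] [∀ i, MeasurableSpace (α i)]
    [∀ i, MeasurableSingletonClass (α i)]
    (X : ∀ i, Ω → α i) (hX : ∀ i, Measurable (X i))
    (Y : Ω → ℝ)
    (hpos : ∀ x : ∀ i, α i, μ {ω | ∀ i, X i ω = x i} ≠ 0)
    (S₁ S₂ : Set (Fin d))
    (h₁ : μ[Y | coordSigma X S₁] =ᵐ[μ] μ[Y | coordSigma X Set.univ])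
    (h₂ : μ[Y | coordSigma X S₂] =ᵐ[μ] μ[Y | coordSigma X Set.univ]) :
    μ[Y | coordSigma X (S₁ ∩ S₂)] =ᵐ[μ] μ[Y | coordSigma X Set.univ] := by
  set f := μ[Y | coordSigma X Set.univ]
  have hsurj : Function.Surjective fun ω i => X i ω := fun x =>
    (nonempty_of_measure_ne_zero (hpos x)).imp fun _ hω => funext hω
  have hfactors (S : Set (Fin d)) : (μ[Y | coordSigma X S]).FactorsThrough (coordMap X S) :=
    (measurable_coordSigma_iff X).1 stronglyMeasurable_condExp.measurable
  have hf₁₂ : Measurable[coordSigma X (S₁ ∩ S₂)] f := (measurable_coordSigma_iff X).2 <|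
    ((hfactors _).of_ae_eq X hpos (hfactors S₁) h₁).coordMap_inter X hsurj
      ((hfactors _).of_ae_eq X hpos (hfactors S₂) h₂)
  have hle : coordSigma X (S₁ ∩ S₂) ≤ coordSigma X Set.univ :=
    coordSigma_mono X (Set.subset_univ _)
  calc μ[Y | coordSigma X (S₁ ∩ S₂)]
      =ᵐ[μ] μ[f | coordSigma X (S₁ ∩ S₂)] :=
        (condExp_condExp_of_le hle (coordSigma_le X hX _)).symm
    _ = f := condExp_of_stronglyMeasurable (coordSigma_le X hX _) hf₁₂.stronglyMeasurable
        integrable_condExp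

/-- Intersection property for stable variable sets under strictly positive density. -/
theorem stmt0 {Ω : Type*} [MeasurableSpace Ω] (μ : Measure Ω) [IsProbabilityMeasure μ]
    {d : ℕ} {α : Fin d → Type*} [∀ i, Fintype (α i)] [∀ i, MeasurableSpace (α i)]
    [∀ i, MeasurableSingletonClass (α i)]
    (X : ∀ i, Ω → α i) (hX : ∀ i, Measurable (X i))
    (Y : Ω → ℝ) (hYm : Measurable Y) (hY : Integrable Y μ)
    (hpos : ∀ x : ∀ i, α i, μ {ω | ∀ i, X i ω = x i} ≠ 0)
    (S₁ S₂ : Set (Fin d))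
    (h₁ : μ[Y | coordSigma X S₁] =ᵐ[μ] μ[Y | coordSigma X Set.univ])
    (h₂ : μ[Y | coordSigma X S₂] =ᵐ[μ] μ[Y | coordSigma X Set.univ]) :
    μ[Y | coordSigma X (S₁ ∩ S₂)] =ᵐ[μ] μ[Y | coordSigma X Set.univ] :=
  stmt0_general μ X hX Y hpos S₁ S₂ h₁ h₂
end

section
/- Under the strictly positive density assumption, the Markov boundary of Y (the unique minimal Markov blanket) exists and is unique, and the set of all Markov blankets of Y equals {S ⊆ X : MBd(Y) ⊆ S}, where MBd(Y) denotes the Markov boundary. -/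
open MeasureTheory

/-- `S` is a Markov blanket of `Y` relative to the features `X`. -/
def MarkovBlanket {Ω : Type*} [MeasurableSpace Ω] (μ : Measure Ω)
    {d : ℕ} {α : Fin d → Type*} {β : Type*}
    (X : ∀ i, Ω → α i) (Y : Ω → β) (S : Set (Fin d)) : Prop :=
  ∀ (y : β) (x : ∀ i, α i),
    μ ({ω | Y ω = y} ∩ {ω | ∀ i, X i ω = x i}) * μ {ω | ∀ i ∈ S, X i ω = x i}
      = μ ({ω | Y ω = y} ∩ {ω | ∀ i ∈ S, X i ω = x i}) * μ {ω | ∀ i, X i ω = x i}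

/-!
When every value of `X` has positive probability, `S` is a Markov blanket exactly when, for each
`y`, the conditional probability `P(Y = y | X = x)` depends on `x` only through `x_S` (one
direction is the law of total probability over the fibre `{x' | x'_S = x_S}`). A function
depending only on `S` and only on `T` depends only on `S ∩ T`: pass through the point agreeing
with `x` on `S` and with `x'` off `S`. This is the intersection property. So the blankets form a
family of subsets of a finite set that contains the whole set and is closed under supersets and
intersections; a minimal member then lies inside every member, hence is the unique minimal
blanket, and the blankets are exactly its supersets.
-/

open ProbabilityTheory Set
open scoped ENNReal

theorem DependsOn.inter {ι β : Type*} {α : ι → Type*} {f : (∀ i, α i) → β} {s t : Set ι}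
    (hs : DependsOn f s) (ht : DependsOn f t) : DependsOn f (s ∩ t) := by
  classical
  intro x x' hxx'
  calc f x = f (s.piecewise x x') := hs fun i hi => (piecewise_eq_of_mem s x x' hi).symm
    _ = f x' := ht fun i hi => by
      by_cases his : i ∈ s
      · rw [piecewise_eq_of_mem s x x' his]; exact hxx' i ⟨his, hi⟩
      · exact piecewise_eq_of_notMem s x x' his

theorem exists_forall_iff_subset_of_inter {ι : Type*} [Finite ι] {P : Set ι → Prop}
    (huniv : P univ) (hinter : ∀ ⦃s t⦄, P s → P t → P (s ∩ t))
    (hmono : ∀ ⦃s t⦄, s ⊆ t → P s → P t) : ∃ M, ∀ S, P S ↔ M ⊆ S := by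
  obtain ⟨M, hM⟩ := exists_minimal_of_wellFoundedLT P ⟨univ, huniv⟩
  refine ⟨M, fun S => ⟨fun hS => ?_, fun hMS => hmono hMS hM.prop⟩⟩
  exact (hM.le_of_le (hinter hM.prop hS) inter_subset_left).trans inter_subset_right

section TotalProbability

variable {Ω ι : Type*} [MeasurableSpace Ω] {μ : Measure Ω} [IsFiniteMeasure μ]
  {I : Finset ι} {s : ι → Set Ω} {t : Set Ω} {c : ℝ≥0∞}

theorem measure_biUnion_inter_eq_mul (hs : ∀ j ∈ I, MeasurableSet (s j))
    (hd : (I : Set ι).PairwiseDisjoint s) (hc : ∀ j ∈ I, μ[t | s j] = c) :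
    μ ((⋃ j ∈ I, s j) ∩ t) = c * μ (⋃ j ∈ I, s j) := by
  rw [← Measure.restrict_apply (Finset.measurableSet_biUnion I hs),
    measure_biUnion_finset hd hs, measure_biUnion_finset hd hs, Finset.mul_sum]
  refine Finset.sum_congr rfl fun j hj => ?_
  rw [Measure.restrict_apply (hs j hj), ← cond_mul_eq_inter (hs j hj), hc j hj]

theorem cond_biUnion_eq (hs : ∀ j ∈ I, MeasurableSet (s j))
    (hd : (I : Set ι).PairwiseDisjoint s) (hpos : μ (⋃ j ∈ I, s j) ≠ 0)
    (hc : ∀ j ∈ I, μ[t | s j] = c) : μ[t | ⋃ j ∈ I, s j] = c := by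
  rw [cond_apply (Finset.measurableSet_biUnion I hs),
    measure_biUnion_inter_eq_mul hs hd hc, mul_comm, mul_assoc,
    ENNReal.mul_inv_cancel hpos (measure_ne_top μ _), mul_one]

end TotalProbability

namespace MarkovBlanket

variable {Ω : Type*} {d : ℕ} {α : Fin d → Type*} {β : Type*} {X : ∀ i, Ω → α i} {Y : Ω → β}

theorem pairwiseDisjoint_setOf_forall_eq (A : Set (∀ i, α i)) :
    A.PairwiseDisjoint fun x => {ω | ∀ i, X i ω = x i} :=
  fun _ _ _ _ hxx' => disjoint_left.2 fun _ hx hx' =>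
    hxx' (funext fun i => (hx i).symm.trans (hx' i))

open Classical in
theorem setOf_forall_mem_eq_biUnion [∀ i, Fintype (α i)] (S : Set (Fin d)) (x : ∀ i, α i) :
    {ω | ∀ i ∈ S, X i ω = x i} =
      ⋃ x' ∈ Finset.univ.filter (fun x' : ∀ i, α i => ∀ i ∈ S, x' i = x i),
        {ω | ∀ i, X i ω = x' i} := by
  ext ω
  simp only [mem_ofPred_eq, mem_iUnion, Finset.mem_filter, Finset.mem_univ, true_and]
  exact ⟨fun h => ⟨fun i => X i ω, h, fun _ => rfl⟩,
    fun ⟨x', hx', hω⟩ i hi => (hω i).trans (hx' i hi)⟩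

variable [MeasurableSpace Ω]

theorem univ (μ : Measure Ω) (X : ∀ i, Ω → α i) (Y : Ω → β) :
    MarkovBlanket μ X Y Set.univ := by
  intro y x
  simp only [mem_univ, true_implies]

variable {μ : Measure Ω} [∀ i, MeasurableSpace (α i)] [∀ i, MeasurableSingletonClass (α i)]

theorem measurableSet_setOf_forall_eq (hX : ∀ i, Measurable (X i)) (x : ∀ i, α i) :
    MeasurableSet {ω | ∀ i, X i ω = x i} := by
  simp only [ofPred_forall]
  exact MeasurableSet.iInter fun i => hX i (measurableSet_singleton (x i))

theorem measurableSet_setOf_forall_mem_eq (hX : ∀ i, Measurable (X i)) (S : Set (Fin d))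
    (x : ∀ i, α i) : MeasurableSet {ω | ∀ i ∈ S, X i ω = x i} := by
  simp only [ofPred_forall]
  exact MeasurableSet.iInter fun i => MeasurableSet.iInter fun _ =>
    hX i (measurableSet_singleton (x i))

variable [IsFiniteMeasure μ]

theorem iff_cond_eq (hX : ∀ i, Measurable (X i))
    (hpos : ∀ x : ∀ i, α i, μ {ω | ∀ i, X i ω = x i} ≠ 0) {S : Set (Fin d)} :
    MarkovBlanket μ X Y S ↔ ∀ (y : β) (x : ∀ i, α i),
      μ[{ω | Y ω = y} | {ω | ∀ i, X i ω = x i}] =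
        μ[{ω | Y ω = y} | {ω | ∀ i ∈ S, X i ω = x i}] := by
  refine forall₂_congr fun y x => ?_
  have hsub : {ω | ∀ i, X i ω = x i} ⊆ {ω | ∀ i ∈ S, X i ω = x i} := fun _ hω i _ => hω i
  have hS0 : μ {ω | ∀ i ∈ S, X i ω = x i} ≠ 0 :=
    fun h => hpos x (measure_mono_null hsub h)
  rw [cond_apply (measurableSet_setOf_forall_eq hX x),
    cond_apply (measurableSet_setOf_forall_mem_eq hX S x), ← ENNReal.div_eq_inv_mul,
    ← ENNReal.div_eq_inv_mul, ENNReal.div_eq_div_iff hS0 (measure_ne_top _ _) (hpos x)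
      (measure_ne_top _ _), inter_comm {ω | ∀ i, X i ω = x i},
    inter_comm {ω | ∀ i ∈ S, X i ω = x i}, mul_comm (μ {ω | ∀ i ∈ S, X i ω = x i}),
    mul_comm (μ {ω | ∀ i, X i ω = x i})]

open Classical in
theorem iff_dependsOn [∀ i, Fintype (α i)] (hX : ∀ i, Measurable (X i))
    (hpos : ∀ x : ∀ i, α i, μ {ω | ∀ i, X i ω = x i} ≠ 0) {S : Set (Fin d)} :
    MarkovBlanket μ X Y S ↔
      ∀ y, DependsOn (fun x => μ[{ω | Y ω = y} | {ω | ∀ i, X i ω = x i}]) S := by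
  rw [iff_cond_eq hX hpos]
  constructor
  · intro h y x x' hxx'
    have hevent : {ω | ∀ i ∈ S, X i ω = x i} = {ω | ∀ i ∈ S, X i ω = x' i} := by
      ext ω
      exact forall₂_congr fun i hi => by rw [hxx' i hi]
    dsimp only
    rw [h, h, hevent]
  · intro h y x
    rw [setOf_forall_mem_eq_biUnion S x]
    refine (cond_biUnion_eq (fun x' _ => measurableSet_setOf_forall_eq hX x')
      (pairwiseDisjoint_setOf_forall_eq _) ?_ fun x' hx' => h y (Finset.mem_filter.1 hx').2).symm
    exact fun h0 => hpos x (measure_mono_null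
      (subset_biUnion_of_mem (u := fun x' : ∀ i, α i => {ω | ∀ i, X i ω = x' i}) (by simp)) h0)

theorem inter [∀ i, Fintype (α i)] (hX : ∀ i, Measurable (X i))
    (hpos : ∀ x : ∀ i, α i, μ {ω | ∀ i, X i ω = x i} ≠ 0) {S T : Set (Fin d)}
    (hS : MarkovBlanket μ X Y S) (hT : MarkovBlanket μ X Y T) :
    MarkovBlanket μ X Y (S ∩ T) := by
  rw [iff_dependsOn hX hpos] at *
  exact fun y => (hS y).inter (hT y)

theorem mono [∀ i, Fintype (α i)] (hX : ∀ i, Measurable (X i))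
    (hpos : ∀ x : ∀ i, α i, μ {ω | ∀ i, X i ω = x i} ≠ 0) {S T : Set (Fin d)} (hST : S ⊆ T)
    (hS : MarkovBlanket μ X Y S) : MarkovBlanket μ X Y T := by
  rw [iff_dependsOn hX hpos] at *
  exact fun y => (hS y).mono hST

theorem exists_forall_iff_subset [∀ i, Fintype (α i)] (hX : ∀ i, Measurable (X i))
    (hpos : ∀ x : ∀ i, α i, μ {ω | ∀ i, X i ω = x i} ≠ 0) :
    ∃ M, ∀ S, MarkovBlanket μ X Y S ↔ M ⊆ S :=
  exists_forall_iff_subset_of_inter (univ μ X Y) (fun _ _ => inter hX hpos)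
    (fun _ _ => mono hX hpos)

end MarkovBlanket

theorem stmt13_general {Ω : Type*} [MeasurableSpace Ω] (μ : Measure Ω) [IsProbabilityMeasure μ]
    {d : ℕ} {α : Fin d → Type*} [∀ i, Fintype (α i)] [∀ i, MeasurableSpace (α i)]
    [∀ i, MeasurableSingletonClass (α i)]
    {β : Type*}
    (X : ∀ i, Ω → α i) (hX : ∀ i, Measurable (X i))
    (Y : Ω → β)
    (hpos : ∀ x : ∀ i, α i, μ {ω | ∀ i, X i ω = x i} ≠ 0) :
    ∃ M : Set (Fin d),
      (MarkovBlanket μ X Y M ∧ ∀ S : Set (Fin d), S ⊂ M → ¬ MarkovBlanket μ X Y S) ∧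
      (∀ M' : Set (Fin d),
        (MarkovBlanket μ X Y M' ∧ ∀ S : Set (Fin d), S ⊂ M' → ¬ MarkovBlanket μ X Y S)
          → M' = M) ∧
      (∀ S : Set (Fin d), MarkovBlanket μ X Y S ↔ M ⊆ S) := by
  obtain ⟨M, hM⟩ := MarkovBlanket.exists_forall_iff_subset (Y := Y) hX hpos
  have hboundary : MarkovBlanket μ X Y M ∧ ∀ S, S ⊂ M → ¬ MarkovBlanket μ X Y S :=
    ⟨(hM M).2 subset_rfl, fun S hSM hS => hSM.not_subset ((hM S).1 hS)⟩
  refine ⟨M, hboundary, fun M' ⟨hM', hmin'⟩ => ?_, hM⟩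
  exact (((hM M').1 hM').eq_or_ssubset.resolve_right fun h => hmin' M h hboundary.1).symm

/-- Existence and uniqueness of the Markov boundary under strictly positive density,
and the characterization of all Markov blankets as its supersets. -/
theorem stmt13 {Ω : Type*} [MeasurableSpace Ω] (μ : Measure Ω) [IsProbabilityMeasure μ]
    {d : ℕ} {α : Fin d → Type*} [∀ i, Fintype (α i)] [∀ i, MeasurableSpace (α i)]
    [∀ i, MeasurableSingletonClass (α i)]
    {β : Type*} [Fintype β] [MeasurableSpace β] [MeasurableSingletonClass β]
    (X : ∀ i, Ω → α i) (hX : ∀ i, Measurable (X i))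
    (Y : Ω → β) (hY : Measurable Y)
    (hpos : ∀ x : ∀ i, α i, μ {ω | ∀ i, X i ω = x i} ≠ 0) :
    ∃ M : Set (Fin d),
      (MarkovBlanket μ X Y M ∧ ∀ S : Set (Fin d), S ⊂ M → ¬ MarkovBlanket μ X Y S) ∧
      (∀ M' : Set (Fin d),
        (MarkovBlanket μ X Y M' ∧ ∀ S : Set (Fin d), S ⊂ M' → ¬ MarkovBlanket μ X Y S)
          → M' = M) ∧
      (∀ S : Set (Fin d), MarkovBlanket μ X Y S ↔ M ⊆ S) :=
  stmt13_general μ X hX Y hpos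
end

section
/- Let X₁, X₂ be independent standard Gaussian random variables, f and g fixed measurable functions with g > 0, and Y = f(X₁) + g(X₂)·ε with ε a standard Gaussian independent of (X₁, X₂), all of appropriate integrability. Then E[Y | X₁, X₂] = E[Y | X₁] = f(X₁) almost surely, so {X₁} is a stable variable set of Y, while (if g is non-constant on a positive-measure set) Y is not conditionally independent of X₂ given X₁. -/
/-!
Since `ε` is centred and independent of `(X₁, X₂)`, pulling out `g(X₂)` gives
`E[g(X₂) ε | X₁, X₂] = g(X₂) E[ε] = 0`, and the tower property passes the identity
`E[Y | X₁, X₂] = f(X₁)` down to `X₁`.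

If `Y` and `X₂` were conditionally independent given `X₁`, the independence of `X₂` and `X₁`
would make `Y` independent of `X₂`. Integrating out `ε` gives
`E[cos (tY) 1_s(X₂)] = E[cos (t f(X₁))] E[exp (-t² g(X₂)² / 2) 1_s(X₂)]`, while independence
gives `E[cos (tY)] P(X₂ ∈ s)`. For small `t ≠ 0` the first factor is nonzero, so
`exp (-t² g(X₂)² / 2)` is a.s. constant, hence so is `g(X₂) > 0`.
-/

open MeasureTheory ProbabilityTheory Real Topology
open scoped NNReal

section

variable {Ω : Type*} {mΩ : MeasurableSpace Ω} {μ : Measure Ω}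

lemma integral_cos_add_mul_gaussianReal (m : ℝ) (v : ℝ≥0) (a s : ℝ) :
    ∫ x, cos (a + s * x) ∂gaussianReal m v = cos (a + s * m) * exp (-(v * s ^ 2) / 2) := by
  have hint : Integrable
      (fun x : ℝ => Complex.exp (a * Complex.I) * Complex.exp (s * x * Complex.I))
      (gaussianReal m v) :=
    (Integrable.of_bound (by fun_prop) 1 (ae_of_all _ fun x => by
      rw [← Complex.ofReal_mul, Complex.norm_exp_ofReal_mul_I])).const_mul _
  calc ∫ x, cos (a + s * x) ∂gaussianReal m v
      = ∫ x, RCLike.re (Complex.exp (a * Complex.I) * Complex.exp (s * x * Complex.I))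
          ∂gaussianReal m v := by
        congr with x
        rw [RCLike.re_to_complex, ← Complex.exp_add, Complex.exp_re]
        simp
    _ = (Complex.exp (a * Complex.I) * charFun (gaussianReal m v) s).re := by
        rw [integral_re hint, integral_const_mul, charFun_apply_real, RCLike.re_to_complex]
    _ = cos (a + s * m) * exp (-(v * s ^ 2) / 2) := by
        have hexp : a * Complex.I + (s * m * Complex.I - v * s ^ 2 / 2)
            = ((-(v * s ^ 2) / 2 : ℝ) : ℂ) + ((a + s * m : ℝ) : ℂ) * Complex.I := by
          push_cast
          ring
        rw [charFun_gaussianReal, ← Complex.exp_add, hexp, Complex.exp_add, ← Complex.ofReal_exp,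
          Complex.re_ofReal_mul, Complex.exp_ofReal_mul_I_re, mul_comm]

lemma integral_cos_add_mul_mul_prod_gaussianReal (ν ρ : Measure ℝ) [IsFiniteMeasure ν]
    [IsFiniteMeasure ρ] {G ψ : ℝ → ℝ} (hG : Measurable G) (hψ : Measurable ψ) {C : ℝ}
    (hψC : ∀ b, |ψ b| ≤ C) :
    ∫ p, cos (p.1 + G p.2.1 * p.2.2) * ψ p.2.1 ∂ν.prod (ρ.prod (gaussianReal 0 1))
      = (∫ a, cos a ∂ν) * ∫ b, ψ b * exp (-G b ^ 2 / 2) ∂ρ := by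
  set F : ℝ × ℝ × ℝ → ℝ := fun p => cos (p.1 + G p.2.1 * p.2.2) * ψ p.2.1
  have hF : Measurable F := by fun_prop
  have hFC (p) : ‖F p‖ ≤ C := by
    rw [norm_mul, Real.norm_eq_abs, Real.norm_eq_abs]
    exact (mul_le_mul (abs_cos_le_one _) (hψC _) (abs_nonneg _) zero_le_one).trans_eq (one_mul C)
  have hinner (a b : ℝ) :
      ∫ c, F (a, b, c) ∂gaussianReal 0 1 = cos a * (ψ b * exp (-G b ^ 2 / 2)) := by
    simp only [F]
    rw [integral_mul_const, integral_cos_add_mul_gaussianReal]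
    simp only [mul_zero, add_zero, NNReal.coe_one, one_mul]
    ring
  rw [integral_prod F (.of_bound hF.aestronglyMeasurable C (ae_of_all _ hFC))]
  calc ∫ a, ∫ q, F (a, q) ∂ρ.prod (gaussianReal 0 1) ∂ν
      = ∫ a, cos a * ∫ b, ψ b * exp (-G b ^ 2 / 2) ∂ρ ∂ν := by
        congr with a
        rw [integral_prod (fun q => F (a, q)) (.of_bound
          (hF.comp measurable_prodMk_left).aestronglyMeasurable C (ae_of_all _ fun q => hFC (a, q)))]
        simp_rw [hinner]
        exact integral_const_mul _ _
    _ = (∫ a, cos a ∂ν) * ∫ b, ψ b * exp (-G b ^ 2 / 2) ∂ρ := integral_mul_const _ _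

lemma integral_cos_add_mul_mul_of_indepFun [IsFiniteMeasure μ] {A B e : Ω → ℝ}
    (hA : Measurable A) (hB : Measurable B) (he : Measurable e)
    (hA_Be : IndepFun A (fun ω => (B ω, e ω)) μ) (hBe : IndepFun B e μ)
    (hlawe : μ.map e = gaussianReal 0 1) {G ψ : ℝ → ℝ} (hG : Measurable G)
    (hψ : Measurable ψ) {C : ℝ} (hψC : ∀ b, |ψ b| ≤ C) :
    ∫ ω, cos (A ω + G (B ω) * e ω) * ψ (B ω) ∂μ
      = (∫ ω, cos (A ω) ∂μ) * ∫ ω, ψ (B ω) * exp (-G (B ω) ^ 2 / 2) ∂μ := by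
  have hlaw : μ.map (fun ω => (A ω, B ω, e ω))
      = (μ.map A).prod ((μ.map B).prod (gaussianReal 0 1)) := by
    rw [hA_Be.map_prod_eq_prod_map_map hA.aemeasurable (hB.prodMk he).aemeasurable,
      hBe.map_prod_eq_prod_map_map hB.aemeasurable he.aemeasurable, hlawe]
  have h := integral_cos_add_mul_mul_prod_gaussianReal (μ.map A) (μ.map B) hG hψ hψC
  rw [← hlaw, integral_map (by fun_prop) (by fun_prop), integral_map (by fun_prop) (by fun_prop),
    integral_map (by fun_prop) (by fun_prop)] at h
  exact h

lemma exp_neg_sq_ae_eq_integral_of_indepFun [IsFiniteMeasure μ] {A B e : Ω → ℝ}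
    (hA : Measurable A) (hB : Measurable B) (he : Measurable e)
    (hA_Be : IndepFun A (fun ω => (B ω, e ω)) μ) (hBe : IndepFun B e μ)
    (hlawe : μ.map e = gaussianReal 0 1) {G : ℝ → ℝ} (hG : Measurable G)
    (hYB : IndepFun (fun ω => A ω + G (B ω) * e ω) B μ) (hA0 : ∫ ω, cos (A ω) ∂μ ≠ 0) :
    (fun ω => exp (-G (B ω) ^ 2 / 2)) =ᵐ[μ] fun _ => ∫ ω, exp (-G (B ω) ^ 2 / 2) ∂μ := by
  set K : Ω → ℝ := fun ω => exp (-G (B ω) ^ 2 / 2)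
  have hK : StronglyMeasurable[MeasurableSpace.comap B inferInstance] K :=
    ((by fun_prop : Measurable fun b => exp (-G b ^ 2 / 2)).comp
      (comap_measurable B)).stronglyMeasurable
  have hKint : Integrable K μ := .of_bound (by fun_prop) 1 (ae_of_all _ fun ω => by
    rw [Real.norm_eq_abs, abs_exp, exp_le_one_iff]
    have := sq_nonneg (G (B ω))
    linarith)
  have hsplit (s : Set ℝ) (hs : MeasurableSet s) :
      ∫ ω, s.indicator 1 (B ω) * K ω ∂μ = (∫ ω, s.indicator 1 (B ω) ∂μ) * ∫ ω, K ω ∂μ := by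
    have hψ : Measurable (s.indicator (1 : ℝ → ℝ)) := measurable_one.indicator hs
    have hψ1 (b : ℝ) : |s.indicator (1 : ℝ → ℝ) b| ≤ 1 := by
      by_cases hb : b ∈ s <;> simp [hb]
    have hind := (hYB.comp measurable_cos hψ).integral_fun_mul_eq_mul_integral
      (by fun_prop) (hψ.comp hB).aestronglyMeasurable
    have hone := integral_cos_add_mul_mul_of_indepFun hA hB he hA_Be hBe hlawe hG
      measurable_const (C := 1) (ψ := fun _ => 1) (fun _ => by simp)
    simp only [Function.comp_apply, mul_one, one_mul] at hind hone
    rw [integral_cos_add_mul_mul_of_indepFun hA hB he hA_Be hBe hlawe hG hψ hψ1, hone] at hind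
    apply mul_left_cancel₀ hA0
    rw [hind]
    ring
  refine ae_eq_of_forall_setIntegral_eq_of_sigmaFinite' hB.comap_le
    (fun _ _ _ => hKint.integrableOn) (fun _ _ _ => integrableOn_const) ?_
    hK.aestronglyMeasurable stronglyMeasurable_const.aestronglyMeasurable
  rintro _ ⟨s, hs, rfl⟩ -
  have hind (c : Ω → ℝ) : ∫ ω in B ⁻¹' s, c ω ∂μ = ∫ ω, s.indicator 1 (B ω) * c ω ∂μ := by
    rw [← integral_indicator (hB hs)]
    congr with ω
    by_cases hω : B ω ∈ s <;> simp [hω]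
  rw [hind, hind, hsplit s hs, integral_mul_const]

lemma condExp_add_mul_ae_eq_of_indep [IsFiniteMeasure μ] {m mₑ : MeasurableSpace Ω}
    (hm : m ≤ mΩ) (hmₑ : mₑ ≤ mΩ) {F G e : Ω → ℝ} (hF : StronglyMeasurable[m] F)
    (hG : StronglyMeasurable[m] G) (he : StronglyMeasurable[mₑ] e) (hind : Indep mₑ m μ)
    (hFint : Integrable F μ) (hGe : Integrable (G * e) μ) (heint : Integrable e μ)
    (he0 : μ[e] = 0) :
    μ[F + G * e | m] =ᵐ[μ] F := by
  have he_cond : μ[e | m] =ᵐ[μ] fun _ => 0 := by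
    simpa [he0] using condExp_indep_eq hmₑ hm he hind
  calc μ[F + G * e | m] =ᵐ[μ] μ[F | m] + μ[G * e | m] := condExp_add hFint hGe m
    _ =ᵐ[μ] F + G * μ[e | m] := by
      rw [condExp_of_stronglyMeasurable hm hF hFint]
      exact Filter.EventuallyEq.rfl.add (condExp_mul_of_stronglyMeasurable_left hG hGe heint)
    _ =ᵐ[μ] F := by
      filter_upwards [he_cond] with ω hω
      simp [hω]

lemma condExp_ae_eq_of_le_of_condExp_ae_eq {E : Type*} [NormedAddCommGroup E]
    [NormedSpace ℝ E] [CompleteSpace E] [IsFiniteMeasure μ] {m₁ m₂ : MeasurableSpace Ω}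
    (h₁₂ : m₁ ≤ m₂) (hm₂ : m₂ ≤ mΩ) {Y F : Ω → E} (hF : StronglyMeasurable[m₁] F)
    (hFint : Integrable F μ) (h : μ[Y | m₂] =ᵐ[μ] F) :
    μ[Y | m₁] =ᵐ[μ] F :=
  calc μ[Y | m₁] =ᵐ[μ] μ[μ[Y | m₂] | m₁] := (condExp_condExp_of_le h₁₂ hm₂).symm
    _ =ᵐ[μ] μ[F | m₁] := condExp_congr_ae h
    _ = F := condExp_of_stronglyMeasurable (h₁₂.trans hm₂) hF hFint

lemma CondIndep.indep_of_indep_right [StandardBorelSpace Ω] [IsProbabilityMeasure μ]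
    {m m₁ m₂ : MeasurableSpace Ω} {hm : m ≤ mΩ} (hm₁ : m₁ ≤ mΩ) (hm₂ : m₂ ≤ mΩ)
    (h : CondIndep m m₁ m₂ hm μ) (h₂ : Indep m₂ m μ) :
    Indep m₁ m₂ μ := by
  rw [Indep_iff]
  intro s t hs ht
  have hst := (condIndep_iff m m₁ m₂ hm hm₁ hm₂ μ).1 h s t hs ht
  have ht_cond : μ⟦t | m⟧ =ᵐ[μ] fun _ => μ.real t := by
    simpa [integral_indicator_const (1 : ℝ) (hm₂ t ht)] using
      condExp_indep_eq hm₂ hm ((stronglyMeasurable_const (b := (1 : ℝ))).indicator ht) h₂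
  have hreal : μ.real (s ∩ t) = μ.real s * μ.real t := calc
    μ.real (s ∩ t) = ∫ ω, (μ⟦s ∩ t | m⟧) ω ∂μ := by
      rw [integral_condExp hm, integral_indicator_const 1 ((hm₁ s hs).inter (hm₂ t ht)),
        smul_eq_mul, mul_one]
    _ = ∫ ω, (μ⟦s | m⟧) ω * μ.real t ∂μ := by
      refine integral_congr_ae ?_
      filter_upwards [hst, ht_cond] with ω h1 h2
      rw [h1, Pi.mul_apply, h2]
    _ = μ.real s * μ.real t := by
      rw [integral_mul_const, integral_condExp hm, integral_indicator_const 1 (hm₁ s hs),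
        smul_eq_mul, mul_one]
  rwa [measureReal_def, measureReal_def, measureReal_def, ← ENNReal.toReal_mul,
    ENNReal.toReal_eq_toReal_iff' (measure_ne_top μ _)
      (ENNReal.mul_ne_top (measure_ne_top μ _) (measure_ne_top μ _))] at hreal

lemma exists_ne_zero_integral_cos_mul_ne_zero [IsProbabilityMeasure μ] {A : Ω → ℝ}
    (hA : AEMeasurable A μ) : ∃ t ≠ 0, ∫ ω, cos (t * A ω) ∂μ ≠ 0 := by
  have hcont : Continuous fun t => ∫ ω, cos (t * A ω) ∂μ :=
    continuous_of_dominated (bound := fun _ => 1) (fun _ => by fun_prop)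
      (fun _ => ae_of_all _ fun _ => abs_cos_le_one _) (integrable_const 1)
      (ae_of_all _ fun _ => by fun_prop)
  have h0 : ∫ ω, cos (0 * A ω) ∂μ ≠ 0 := by simp
  obtain ⟨t, hne, ht⟩ := ((hcont.continuousAt.eventually_ne h0).filter_mono
    nhdsWithin_le_nhds |>.and self_mem_nhdsWithin).exists (f := 𝓝[≠] (0 : ℝ))
  exact ⟨t, ht, hne⟩

lemma injOn_exp_neg_mul_sq {t : ℝ} (ht : t ≠ 0) :
    Set.InjOn (fun x => exp (-(t * x) ^ 2 / 2)) (Set.Ioi 0) := by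
  intro x hx y hy hxy
  have hsq : t ^ 2 * x ^ 2 = t ^ 2 * y ^ 2 := by
    simpa [mul_pow] using hxy
  exact (sq_eq_sq₀ hx.le hy.le).1 (mul_left_cancel₀ (pow_ne_zero 2 ht) hsq)

lemma Filter.EventuallyEq.exists_const_of_comp {α β γ : Type*} {l : Filter α} [l.NeBot]
    {φ : β → γ} {s : Set β} (hφ : Set.InjOn φ s) {H : α → β} (hH : ∀ a, H a ∈ s) {k : γ}
    (h : (fun a => φ (H a)) =ᶠ[l] fun _ => k) : ∃ c, H =ᶠ[l] fun _ => c := by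
  obtain ⟨a₀, ha₀⟩ := h.exists
  exact ⟨H a₀, h.mono fun a ha => hφ (hH a) (hH a₀) (ha.trans ha₀.symm)⟩

end

theorem stmt15_general {Ω : Type*} [MeasurableSpace Ω] [StandardBorelSpace Ω]
    (μ : Measure Ω) [IsProbabilityMeasure μ]
    (X₁ X₂ e : Ω → ℝ) (hX₁ : Measurable X₁) (hX₂ : Measurable X₂) (he : Measurable e)
    (hlawe : μ.map e = gaussianReal 0 1)
    (hindep : iIndepFun ![X₁, X₂, e] μ)
    (f g : ℝ → ℝ) (hf : Measurable f) (hg : Measurable g) (hgpos : ∀ x, 0 < g x)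
    (Y : Ω → ℝ) (hYdef : Y = fun ω => f (X₁ ω) + g (X₂ ω) * e ω)
    (hYint : Integrable Y μ)
    (hfint : Integrable (fun ω => f (X₁ ω)) μ)
    (hgnc : ∀ c : ℝ, ¬ ((fun ω => g (X₂ ω)) =ᵐ[μ] fun _ => c)) :
    (μ[Y | MeasurableSpace.comap (fun ω => (X₁ ω, X₂ ω)) inferInstance]
        =ᵐ[μ] fun ω => f (X₁ ω)) ∧
    (μ[Y | MeasurableSpace.comap X₁ inferInstance] =ᵐ[μ] fun ω => f (X₁ ω)) ∧
    ¬ CondIndepFun (MeasurableSpace.comap X₁ inferInstance) (hX₁.comap_le) Y X₂ μ := by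
  have hmeas (i : Fin 3) : Measurable (![X₁, X₂, e] i) := by fin_cases i <;> assumption
  have h1_2e : IndepFun X₁ (fun ω => (X₂ ω, e ω)) μ := by
    simpa using (hindep.indepFun_prodMk hmeas 1 2 0 (by decide) (by decide)).symm
  have h12_e : IndepFun (fun ω => (X₁ ω, X₂ ω)) e μ := by
    simpa using hindep.indepFun_prodMk hmeas 0 1 2 (by decide) (by decide)
  have h2_e : IndepFun X₂ e μ := by simpa using hindep.indepFun (show (1 : Fin 3) ≠ 2 by decide)
  have h2_1 : IndepFun X₂ X₁ μ := by simpa using hindep.indepFun (show (1 : Fin 3) ≠ 0 by decide)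
  have hpair : Measurable fun ω => (X₁ ω, X₂ ω) := hX₁.prodMk hX₂
  have hf₁ : StronglyMeasurable[MeasurableSpace.comap X₁ inferInstance] fun ω => f (X₁ ω) :=
    (hf.comp (comap_measurable X₁)).stronglyMeasurable
  have heint : Integrable e μ :=
    (integrable_map_measure aestronglyMeasurable_id he.aemeasurable).1
      (by rw [hlawe]; exact (memLp_id_gaussianReal 1).integrable le_rfl)
  have he0 : μ[e] = 0 := by
    rw [HasLaw.integral_eq ⟨he.aemeasurable, hlawe⟩, integral_id_gaussianReal]
  have hYeq : Y = (fun ω => f (X₁ ω)) + (fun ω => g (X₂ ω)) * e := hYdef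
  have hpart1 : μ[Y | MeasurableSpace.comap (fun ω => (X₁ ω, X₂ ω)) inferInstance]
      =ᵐ[μ] fun ω => f (X₁ ω) := by
    rw [hYeq]
    exact condExp_add_mul_ae_eq_of_indep hpair.comap_le he.comap_le
      ((hf.comp (measurable_fst.comp (comap_measurable _))).stronglyMeasurable)
      ((hg.comp (measurable_snd.comp (comap_measurable _))).stronglyMeasurable)
      (comap_measurable e).stronglyMeasurable h12_e.symm hfint
      (by simpa [hYeq] using hYint.sub hfint) heint he0
  refine ⟨hpart1, condExp_ae_eq_of_le_of_condExp_ae_eq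
    (measurable_fst.comp (comap_measurable _)).comap_le hpair.comap_le hf₁ hfint hpart1,
    fun hCI => ?_⟩
  have hYX₂ : IndepFun Y X₂ μ :=
    CondIndep.indep_of_indep_right (by rw [hYdef]; fun_prop : Measurable Y).comap_le
      hX₂.comap_le hCI h2_1
  obtain ⟨t, ht, hu⟩ :=
    exists_ne_zero_integral_cos_mul_ne_zero (μ := μ) (hf.comp hX₁).aemeasurable
  have htY : IndepFun (fun ω => t * f (X₁ ω) + t * g (X₂ ω) * e ω) X₂ μ := by
    have hY : (fun ω => t * f (X₁ ω) + t * g (X₂ ω) * e ω) = (t * ·) ∘ Y := by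
      funext ω
      simp only [hYdef, Function.comp_apply]
      ring
    exact hY ▸ hYX₂.comp (measurable_const_mul t) measurable_id
  have hK := exp_neg_sq_ae_eq_integral_of_indepFun (A := fun ω => t * f (X₁ ω)) (G := (t * g ·))
    (by fun_prop) hX₂ he (h1_2e.comp (measurable_const.mul hf) measurable_id) h2_e hlawe
    (by fun_prop) htY hu
  obtain ⟨c, hc⟩ := hK.exists_const_of_comp (injOn_exp_neg_mul_sq ht) (fun ω => hgpos (X₂ ω))
  exact hgnc c hc

/-- With `Y = f(X₁) + g(X₂) ε` for independent standard Gaussians `X₁, X₂, ε` and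
`g > 0`: `E[Y | X₁, X₂] = E[Y | X₁] = f(X₁)` a.s., so `{X₁}` is a stable variable
set; yet if `g ∘ X₂` is not a.s. constant, `Y` is not conditionally independent of
`X₂` given `X₁`. -/
theorem stmt15 {Ω : Type*} [MeasurableSpace Ω] [StandardBorelSpace Ω]
    (μ : Measure Ω) [IsProbabilityMeasure μ]
    (X₁ X₂ e : Ω → ℝ) (hX₁ : Measurable X₁) (hX₂ : Measurable X₂) (he : Measurable e)
    (hlaw1 : μ.map X₁ = gaussianReal 0 1)
    (hlaw2 : μ.map X₂ = gaussianReal 0 1)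
    (hlawe : μ.map e = gaussianReal 0 1)
    (hindep : iIndepFun ![X₁, X₂, e] μ)
    (f g : ℝ → ℝ) (hf : Measurable f) (hg : Measurable g) (hgpos : ∀ x, 0 < g x)
    (Y : Ω → ℝ) (hYdef : Y = fun ω => f (X₁ ω) + g (X₂ ω) * e ω)
    (hYint : Integrable Y μ)
    (hfint : Integrable (fun ω => f (X₁ ω)) μ)
    (hgnc : ∀ c : ℝ, ¬ ((fun ω => g (X₂ ω)) =ᵐ[μ] fun _ => c)) :
    (μ[Y | MeasurableSpace.comap (fun ω => (X₁ ω, X₂ ω)) inferInstance]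
        =ᵐ[μ] fun ω => f (X₁ ω)) ∧
    (μ[Y | MeasurableSpace.comap X₁ inferInstance] =ᵐ[μ] fun ω => f (X₁ ω)) ∧
    ¬ CondIndepFun (MeasurableSpace.comap X₁ inferInstance) (hX₁.comap_le) Y X₂ μ :=
  stmt15_general μ X₁ X₂ e hX₁ hX₂ he hlawe hindep f g hf hg hgpos Y hYdef hYint hfint hgnc
end

section
/- Under the covariate-shift assumption (P_te(Y|X) = P_tr(Y|X), same support) and the strictly positive density assumption, if S ⊆ X is a Markov blanket of Y under P_tr, then S is a Markov blanket of Y under P_te, and conversely; in particular the Markov boundary is the same under both distributions. -/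
open MeasureTheory

/-!
Since all feature values have positive probability, `S` is a Markov blanket exactly when the
conditional law `P(Y = y | X = x)` depends on `x` only through its restriction to `S`. That
property involves the joint law only through the conditional law of `Y` given `X`, which
covariate shift leaves unchanged.
-/

/-- In ratio form: from `a / b = a' / b'`, `c / d = a / b` and `c' / d' = a' / b'` conclude
`c / d = c' / d'`; cross-multiplied, so that `d` and `d'` may vanish. -/
theorem ENNReal.cross_mul_eq_of_cross_mul_eq {a b c d a' b' c' d' : ENNReal}
    (hb : b ≠ 0) (hb_top : b ≠ ⊤) (hb' : b' ≠ 0) (hb'_top : b' ≠ ⊤)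
    (h : a * b' = a' * b) (hc : c * b = a * d) (hc' : c' * b' = a' * d') :
    c * d' = c' * d := by
  rw [← ENNReal.mul_right_inj (mul_ne_zero hb hb') (ENNReal.mul_ne_top hb_top hb'_top)]
  calc b * b' * (c * d') = (c * b) * (d' * b') := by ring
    _ = (a * b') * (d * d') := by rw [hc]; ring
    _ = (c' * b') * (b * d) := by rw [h, hc']; ring
    _ = b * b' * (c' * d) := by ring

section MarkovBlanket

variable {Ω : Type*} [MeasurableSpace Ω] {d : ℕ} {α : Fin d → Type*} {β : Type*}

def ConditionalFactorsThrough (μ : Measure Ω) (X : ∀ i, Ω → α i) (Y : Ω → β)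
    (S : Set (Fin d)) : Prop :=
  ∀ (y : β) (x x' : ∀ i, α i), (∀ i ∈ S, x' i = x i) →
    μ ({ω | Y ω = y} ∩ {ω | ∀ i, X i ω = x i}) * μ {ω | ∀ i, X i ω = x' i}
      = μ ({ω | Y ω = y} ∩ {ω | ∀ i, X i ω = x' i}) * μ {ω | ∀ i, X i ω = x i}

def SameConditional (μ ν : Measure Ω) (X : ∀ i, Ω → α i) (Y : Ω → β) : Prop :=
  ∀ (y : β) (x : ∀ i, α i),
    ν ({ω | Y ω = y} ∩ {ω | ∀ i, X i ω = x i}) * μ {ω | ∀ i, X i ω = x i}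
      = μ ({ω | Y ω = y} ∩ {ω | ∀ i, X i ω = x i}) * ν {ω | ∀ i, X i ω = x i}

theorem SameConditional.symm {μ ν : Measure Ω} {X : ∀ i, Ω → α i} {Y : Ω → β}
    (h : SameConditional μ ν X Y) : SameConditional ν μ X Y :=
  fun y x => (h y x).symm

theorem measurableSet_setOf_forall_eq [∀ i, MeasurableSpace (α i)]
    [∀ i, MeasurableSingletonClass (α i)] {X : ∀ i, Ω → α i} (hX : ∀ i, Measurable (X i))
    (x : ∀ i, α i) : MeasurableSet {ω | ∀ i, X i ω = x i} := by
  rw [Set.ofPred_forall]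
  exact .iInter fun i => hX i (measurableSet_singleton (x i))

open Classical in
theorem measure_inter_setOf_forall_mem_eq_sum [∀ i, Fintype (α i)]
    [∀ i, MeasurableSpace (α i)] [∀ i, MeasurableSingletonClass (α i)]
    (μ : Measure Ω) {X : ∀ i, Ω → α i} (hX : ∀ i, Measurable (X i)) {A : Set Ω}
    (hA : MeasurableSet A) (S : Set (Fin d)) (x : ∀ i, α i) :
    μ (A ∩ {ω | ∀ i ∈ S, X i ω = x i})
      = ∑ x' ∈ Finset.univ.filter (fun x' : ∀ i, α i => ∀ i ∈ S, x' i = x i),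
          μ (A ∩ {ω | ∀ i, X i ω = x' i}) := by
  have hunion : A ∩ {ω | ∀ i ∈ S, X i ω = x i}
      = ⋃ x' ∈ Finset.univ.filter (fun x' : ∀ i, α i => ∀ i ∈ S, x' i = x i),
          A ∩ {ω | ∀ i, X i ω = x' i} := by
    ext ω
    simp only [Set.mem_inter_iff, Set.mem_ofPred_eq, Set.mem_iUnion, Finset.mem_filter,
      Finset.mem_univ, true_and, exists_prop]
    constructor
    · rintro ⟨hωA, hωS⟩
      exact ⟨fun i => X i ω, hωS, hωA, fun i => rfl⟩
    · rintro ⟨x', hx', hωA, hω⟩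
      exact ⟨hωA, fun i hi => (hω i).trans (hx' i hi)⟩
  rw [hunion]
  refine measure_biUnion_finset (fun x' _ x'' _ hne => ?_)
    (fun x' _ => hA.inter (measurableSet_setOf_forall_eq hX x'))
  refine Set.disjoint_left.2 fun ω hω' hω'' => hne (funext fun i => ?_)
  exact (hω'.2 i).symm.trans (hω''.2 i)

theorem MarkovBlanket.conditionalFactorsThrough {μ : Measure Ω} [IsFiniteMeasure μ]
    {X : ∀ i, Ω → α i} {Y : Ω → β} {S : Set (Fin d)}
    (hpos : ∀ x : ∀ i, α i, μ {ω | ∀ i, X i ω = x i} ≠ 0) (h : MarkovBlanket μ X Y S) :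
    ConditionalFactorsThrough μ X Y S := by
  intro y x x' hxx'
  have hblock : {ω | ∀ i ∈ S, X i ω = x' i} = {ω | ∀ i ∈ S, X i ω = x i} := by
    ext ω
    exact forall₂_congr fun i hi => by rw [hxx' i hi]
  have hcell_sub : {ω | ∀ i, X i ω = x i} ⊆ {ω | ∀ i ∈ S, X i ω = x i} :=
    fun ω hω i _ => hω i
  have hblock_pos : μ {ω | ∀ i ∈ S, X i ω = x i} ≠ 0 :=
    fun h0 => hpos x (measure_mono_null hcell_sub h0)
  have h' := h y x'
  rw [hblock] at h'
  exact ENNReal.cross_mul_eq_of_cross_mul_eq hblock_pos (measure_ne_top μ _) hblock_pos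
    (measure_ne_top μ _) rfl (h y x) h'

open Classical in
theorem ConditionalFactorsThrough.markovBlanket [∀ i, Fintype (α i)]
    [∀ i, MeasurableSpace (α i)] [∀ i, MeasurableSingletonClass (α i)]
    [MeasurableSpace β] [MeasurableSingletonClass β] {μ : Measure Ω}
    {X : ∀ i, Ω → α i} (hX : ∀ i, Measurable (X i)) {Y : Ω → β} (hY : Measurable Y)
    {S : Set (Fin d)} (h : ConditionalFactorsThrough μ X Y S) : MarkovBlanket μ X Y S := by
  intro y x
  have hblock := measure_inter_setOf_forall_mem_eq_sum μ hX MeasurableSet.univ S x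
  simp only [Set.univ_inter] at hblock
  rw [hblock, measure_inter_setOf_forall_mem_eq_sum (A := {ω | Y ω = y}) μ hX
    (hY (measurableSet_singleton y)), Finset.mul_sum, Finset.sum_mul]
  exact Finset.sum_congr rfl fun x' hx' => h y x x' (Finset.mem_filter.mp hx').2

theorem markovBlanket_iff_conditionalFactorsThrough [∀ i, Fintype (α i)]
    [∀ i, MeasurableSpace (α i)] [∀ i, MeasurableSingletonClass (α i)]
    [MeasurableSpace β] [MeasurableSingletonClass β] {μ : Measure Ω} [IsFiniteMeasure μ]
    {X : ∀ i, Ω → α i} (hX : ∀ i, Measurable (X i)) {Y : Ω → β} (hY : Measurable Y)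
    (hpos : ∀ x : ∀ i, α i, μ {ω | ∀ i, X i ω = x i} ≠ 0) (S : Set (Fin d)) :
    MarkovBlanket μ X Y S ↔ ConditionalFactorsThrough μ X Y S :=
  ⟨MarkovBlanket.conditionalFactorsThrough hpos, ConditionalFactorsThrough.markovBlanket hX hY⟩

theorem ConditionalFactorsThrough.of_sameConditional {μ ν : Measure Ω} [IsFiniteMeasure μ]
    {X : ∀ i, Ω → α i} {Y : Ω → β} {S : Set (Fin d)}
    (hpos : ∀ x : ∀ i, α i, μ {ω | ∀ i, X i ω = x i} ≠ 0) (hμν : SameConditional μ ν X Y)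
    (h : ConditionalFactorsThrough μ X Y S) : ConditionalFactorsThrough ν X Y S :=
  fun y x x' hxx' => ENNReal.cross_mul_eq_of_cross_mul_eq (hpos x) (measure_ne_top μ _)
    (hpos x') (measure_ne_top μ _) (h y x x' hxx') (hμν y x) (hμν y x')

end MarkovBlanket

theorem stmt17_general {Ω : Type*} [MeasurableSpace Ω] (μtr μte : Measure Ω)
    [IsProbabilityMeasure μtr] [IsProbabilityMeasure μte]
    {d : ℕ} {α : Fin d → Type*} [∀ i, Fintype (α i)] [∀ i, MeasurableSpace (α i)]
    [∀ i, MeasurableSingletonClass (α i)]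
    {β : Type*} [MeasurableSpace β] [MeasurableSingletonClass β]
    (X : ∀ i, Ω → α i) (hX : ∀ i, Measurable (X i))
    (Y : Ω → β) (hY : Measurable Y)
    (hpos_tr : ∀ x : ∀ i, α i, μtr {ω | ∀ i, X i ω = x i} ≠ 0)
    (hpos_te : ∀ x : ∀ i, α i, μte {ω | ∀ i, X i ω = x i} ≠ 0)
    (hCS : ∀ (y : β) (x : ∀ i, α i),
      μte ({ω | Y ω = y} ∩ {ω | ∀ i, X i ω = x i}) * μtr {ω | ∀ i, X i ω = x i}
        = μtr ({ω | Y ω = y} ∩ {ω | ∀ i, X i ω = x i}) * μte {ω | ∀ i, X i ω = x i}) :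
    (∀ S : Set (Fin d), MarkovBlanket μtr X Y S ↔ MarkovBlanket μte X Y S) ∧
    (∀ M : Set (Fin d),
      (MarkovBlanket μtr X Y M ∧ ∀ S : Set (Fin d), S ⊂ M → ¬ MarkovBlanket μtr X Y S)
        ↔
      (MarkovBlanket μte X Y M ∧ ∀ S : Set (Fin d), S ⊂ M → ¬ MarkovBlanket μte X Y S)) := by
  have hshift : SameConditional μtr μte X Y := hCS
  have hblanket (S : Set (Fin d)) : MarkovBlanket μtr X Y S ↔ MarkovBlanket μte X Y S := by
    rw [markovBlanket_iff_conditionalFactorsThrough hX hY hpos_tr,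
      markovBlanket_iff_conditionalFactorsThrough hX hY hpos_te]
    exact ⟨.of_sameConditional hpos_tr hshift, .of_sameConditional hpos_te hshift.symm⟩
  refine ⟨hblanket, fun M => and_congr (hblanket M) ?_⟩
  exact forall₂_congr fun S _ => not_congr (hblanket S)

/-- Under covariate shift (identical conditional law of `Y` given `X`, same strictly
positive support), the Markov blankets of `Y` coincide under the training and test
distributions; in particular, the Markov boundary is the same. -/
theorem stmt17 {Ω : Type*} [MeasurableSpace Ω] (μtr μte : Measure Ω)
    [IsProbabilityMeasure μtr] [IsProbabilityMeasure μte]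
    {d : ℕ} {α : Fin d → Type*} [∀ i, Fintype (α i)] [∀ i, MeasurableSpace (α i)]
    [∀ i, MeasurableSingletonClass (α i)]
    {β : Type*} [Fintype β] [MeasurableSpace β] [MeasurableSingletonClass β]
    (X : ∀ i, Ω → α i) (hX : ∀ i, Measurable (X i))
    (Y : Ω → β) (hY : Measurable Y)
    (hpos_tr : ∀ x : ∀ i, α i, μtr {ω | ∀ i, X i ω = x i} ≠ 0)
    (hpos_te : ∀ x : ∀ i, α i, μte {ω | ∀ i, X i ω = x i} ≠ 0)
    (hCS : ∀ (y : β) (x : ∀ i, α i),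
      μte ({ω | Y ω = y} ∩ {ω | ∀ i, X i ω = x i}) * μtr {ω | ∀ i, X i ω = x i}
        = μtr ({ω | Y ω = y} ∩ {ω | ∀ i, X i ω = x i}) * μte {ω | ∀ i, X i ω = x i}) :
    (∀ S : Set (Fin d), MarkovBlanket μtr X Y S ↔ MarkovBlanket μte X Y S) ∧
    (∀ M : Set (Fin d),
      (MarkovBlanket μtr X Y M ∧ ∀ S : Set (Fin d), S ⊂ M → ¬ MarkovBlanket μtr X Y S)
        ↔
      (MarkovBlanket μte X Y M ∧ ∀ S : Set (Fin d), S ⊂ M → ¬ MarkovBlanket μte X Y S)) :=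
  stmt17_general μtr μte X hX Y hY hpos_tr hpos_te hCS
end
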